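/- arXiv:math/0601675 — 6 statements merged into one kernel-verified Lean document; each statement's English description precedes it below -/
import Mathlib

section
/- For all positive integers s and n, the element (s^n − 1) · Σ_{p prime, (p−1) ∣ n, p ∤ s} c_{p-1}^{n/(p-1)}/p of ℚ[c_1, c_2, ...] lies in ℤ[c_1, c_2, ...], i.e., it has integer coefficients (the sum ranging over the finitely many primes p with p−1 dividing n and p not dividing s). -/
/-- For all positive integers `s` and `n`, the element
`(sⁿ − 1) · ∑_{p prime, (p−1) ∣ n, p ∤ s} c_{p-1}^{n/(p-1)}/p` of `ℚ[c₁, c₂, ...]`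
has integer coefficients, i.e. lies in `ℤ[c₁, c₂, ...]`.  The indeterminate `cᵢ`
is the variable `MvPolynomial.X i` of the polynomial ring `ℚ[c₁, c₂, ...]` in
countably many variables; the sum ranges over the finitely many primes `p` with
`p − 1` dividing `n` and `p` not dividing `s` (all such primes satisfy `p ≤ n + 1`). -/
theorem integrality_lemma_universal_vonStaudt
    (s n : ℕ) (hs : 0 < s) (hn : 0 < n) (μ : ℕ →₀ ℕ) :
    ∃ z : ℤ,
      MvPolynomial.coeff μ
        (MvPolynomial.C ((s : ℚ) ^ n - 1) *
          ∑ p ∈ (Finset.range (n + 2)).filter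
              (fun p => p.Prime ∧ (p - 1) ∣ n ∧ ¬ p ∣ s),
            MvPolynomial.C ((p : ℚ)⁻¹) *
              (MvPolynomial.X (p - 1) : MvPolynomial ℕ ℚ) ^ (n / (p - 1))) = (z : ℚ) := by
  classical
  set F := (Finset.range (n + 2)).filter
      (fun p => p.Prime ∧ (p - 1) ∣ n ∧ ¬ p ∣ s) with hFdef
  rw [MvPolynomial.coeff_C_mul, MvPolynomial.coeff_sum]
  simp only [MvPolynomial.coeff_C_mul, MvPolynomial.coeff_X_pow]
  by_cases h : ∃ p ∈ F, Finsupp.single (p - 1) (n / (p - 1)) = μ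
  · obtain ⟨p, hpF, heq⟩ := h
    have hF := Finset.mem_filter.mp hpF
    have hprime : p.Prime := hF.2.1
    have hdvd : (p - 1) ∣ n := hF.2.2.1
    have hnds : ¬ p ∣ s := hF.2.2.2
    have hp2 : 2 ≤ p := hprime.two_le
    have hsum : (∑ q ∈ F, ((q : ℚ)⁻¹ *
        if Finsupp.single (q - 1) (n / (q - 1)) = μ then 1 else 0)) = (p : ℚ)⁻¹ := by
      rw [Finset.sum_eq_single p]
      · simp [heq]
      · intro q hqF hqp
        have hFq := Finset.mem_filter.mp hqF
        have hq2 : 2 ≤ q := hFq.2.1.two_le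
        have hqdvd : (q - 1) ∣ n := hFq.2.2.1
        have hne : Finsupp.single (q - 1) (n / (q - 1)) ≠ μ := by
          intro hq
          rw [← heq] at hq
          have hqpos : 0 < n / (q - 1) :=
            Nat.div_pos (Nat.le_of_dvd hn hqdvd) (by omega)
          rcases (Finsupp.single_eq_single_iff _ _ _ _).mp hq with ⟨h1, _⟩ | ⟨h1, _⟩
          · exact hqp (by omega)
          · omega
        simp [hne]
      · intro hp; exact absurd hpF hp
    rw [hsum]
    -- Fermat's little theorem
    haveI : Fact p.Prime := ⟨hprime⟩
    have hs0 : (s : ZMod p) ≠ 0 := by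
      intro h0
      exact hnds ((ZMod.natCast_eq_zero_iff _ _).mp h0)
    have hpow : (s : ZMod p) ^ n = 1 := by
      calc (s : ZMod p) ^ n = ((s : ZMod p) ^ (p - 1)) ^ (n / (p - 1)) := by
            rw [← pow_mul, Nat.mul_div_cancel' hdvd]
        _ = 1 := by rw [ZMod.pow_card_sub_one_eq_one hs0, one_pow]
    have hdvdZ : (p : ℤ) ∣ (s : ℤ) ^ n - 1 := by
      rw [← ZMod.intCast_zmod_eq_zero_iff_dvd]
      push_cast
      rw [hpow]; ring
    obtain ⟨k, hk⟩ := hdvdZ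
    refine ⟨k, ?_⟩
    have hpQ : (p : ℚ) ≠ 0 := by positivity
    have : ((s : ℚ) ^ n - 1) = (p : ℚ) * (k : ℚ) := by
      have := congrArg (fun x : ℤ => (x : ℚ)) hk
      push_cast at this
      linarith
    rw [this]
    field_simp
  · push_neg at h
    refine ⟨0, ?_⟩
    rw [Finset.sum_eq_zero]
    · simp
    · intro q hqF
      simp [h q hqF]
end

section
/- Let p be a prime and n a positive integer. Set K = ⌊n/(p−1)⌋ and S_p(n) = Σ_{k=1}^{K} C(n, k(p−1)). Then S_p(n) ≡ 0 (mod p) if (p−1) does not divide n, and S_p(n) ≡ 1 (mod p) if (p−1) divides n. -/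
/-!
In a finite field `K` with `q` elements, `∑ x, x ^ j` is `-1` when `j ≥ 1` and `q - 1 ∣ j`, and
`0` otherwise (for `j = 0` it is `q = 0`). Expanding both sides of `∑ x, (x + 1) ^ n = ∑ x, x ^ n`
binomially therefore gives `∑_{1 ≤ j ≤ n, q - 1 ∣ j} C(n, j) = [q - 1 ∣ n]` in `K`; take `K = 𝔽_p`.
-/

open Finset

theorem FiniteField.sum_pow_of_ne_zero {K : Type*} [Field K] [Fintype K] {i : ℕ} (hi : i ≠ 0) :
    ∑ x : K, x ^ i = if Fintype.card K - 1 ∣ i then -1 else 0 := by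
  classical
  rw [← sum_pow_units K i, Fintype.sum_eq_add_sum_compl 0, zero_pow hi, zero_add,
    ← Fintype.sum_equiv unitsEquivNeZero.symm (fun x : {a : K // a ≠ 0} => (x : K) ^ i) _
      (fun _ => rfl)]
  exact Finset.sum_subtype _ (fun x => by simp) _

theorem FiniteField.sum_choose_filter_dvd_card_sub_one {K : Type*} [Field K] [Fintype K]
    {n : ℕ} (hn : n ≠ 0) :
    ∑ j ∈ Icc 1 n with Fintype.card K - 1 ∣ j, (n.choose j : K) =
      if Fintype.card K - 1 ∣ n then 1 else 0 := by
  have hshift : ∑ x : K, (x + 1) ^ n = ∑ x : K, x ^ n :=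
    Fintype.sum_equiv (Equiv.addRight 1) _ _ fun _ => rfl
  have hexpand : ∑ x : K, (x + 1) ^ n = ∑ j ∈ Icc 1 n, (n.choose j : K) * ∑ x : K, x ^ j := by
    simp only [add_pow, one_pow, mul_one]
    rw [Finset.sum_comm, range_eq_Ico, sum_eq_sum_Ico_succ_bot n.succ_pos, zero_add,
      Nat.succ_eq_add_one, Ico_add_one_right_eq_Icc]
    simp [Finset.mul_sum, mul_comm]
  have hterm : ∀ j ∈ Icc 1 n, (n.choose j : K) * ∑ x : K, x ^ j =
      -if Fintype.card K - 1 ∣ j then (n.choose j : K) else 0 := by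
    intro j hj
    rw [sum_pow_of_ne_zero (Nat.one_le_iff_ne_zero.mp (mem_Icc.mp hj).1)]
    split_ifs <;> simp
  rw [hexpand, sum_congr rfl hterm, sum_neg_distrib, sum_pow_of_ne_zero hn] at hshift
  rw [sum_filter]
  split_ifs at hshift ⊢ <;> linear_combination -hshift

theorem Nat.filter_dvd_Icc_one_eq_map {d : ℕ} (hd : 0 < d) (n : ℕ) :
    {j ∈ Icc 1 n | d ∣ j} = (Icc 1 (n / d)).map ⟨(· * d), mul_left_injective₀ hd.ne'⟩ := by
  ext j
  simp only [mem_filter, mem_Icc, mem_map, Function.Embedding.coeFn_mk]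
  constructor
  · rintro ⟨⟨h1, hn⟩, k, rfl⟩
    exact ⟨k, ⟨Nat.pos_of_mul_pos_left h1, (Nat.le_div_iff_mul_le hd).mpr (mul_comm d k ▸ hn)⟩,
      mul_comm k d⟩
  · rintro ⟨k, ⟨hk1, hk⟩, rfl⟩
    exact ⟨⟨Nat.mul_pos hk1 hd, (Nat.le_div_iff_mul_le hd).mp hk⟩, dvd_mul_left d k⟩

/-- Let `p` be a prime and `n` a positive integer. Set
`K = ⌊n/(p−1)⌋` and `S_p(n) = ∑_{k=1}^{K} C(n, k(p−1))`. Then `S_p(n) ≡ 0 (mod p)`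
if `(p−1)` does not divide `n`, and `S_p(n) ≡ 1 (mod p)` if `(p−1)` divides `n`. -/
theorem jenkins_binomial_sum_mod_p (p n : ℕ) (hp : p.Prime) (hn : 0 < n) :
    (¬ (p - 1) ∣ n →
      ((∑ k ∈ Finset.Icc 1 (n / (p - 1)), n.choose (k * (p - 1)) : ℕ) : ZMod p) = 0) ∧
    ((p - 1) ∣ n →
      ((∑ k ∈ Finset.Icc 1 (n / (p - 1)), n.choose (k * (p - 1)) : ℕ) : ZMod p) = 1) := by
  have := Fact.mk hp
  have key := FiniteField.sum_choose_filter_dvd_card_sub_one (K := ZMod p) hn.ne'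
  rw [ZMod.card, Nat.filter_dvd_Icc_one_eq_map (Nat.sub_pos_of_lt hp.one_lt), sum_map] at key
  push_cast
  exact ⟨fun h => by simpa [h] using key, fun h => by simpa [h] using key⟩
end

section
/- Suppose (P_n)_{n≥0} and (Q_n)_{n≥0} are sequences of polynomials in ℚ[x] such that P_0 = Q_0 = 1, P_n' = n·P_{n-1} and Q_n' = n·Q_{n-1} for all n ≥ 1, and Σ_{k=l}^{m} a_k P_n(x+k) = n·x^{n-1} and Σ_{k=l}^{m} a_k Q_n(x+k) = n·x^{n-1} (as polynomial identities) for all n ≥ 1. Then P_n = Q_n for every n. -/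
/-- Let `Δ_q f(x) = ∑_{k=l}^{m} a_k f(x+k)` with `∑ a_k = 0` and
`∑ k·a_k = 1`.  If `(P_n)` and `(Q_n)` are sequences of polynomials with
`P_0 = Q_0 = 1`, `P_n' = n·P_{n-1}`, `Q_n' = n·Q_{n-1}` and
`Δ_q P_n = n·x^{n-1} = Δ_q Q_n` for all `n ≥ 1`, then `P_n = Q_n` for every `n`. -/
theorem bernoulli_type_polynomials_unique
    (l m : ℤ) (hlm : l < m) (a : ℤ → ℚ)
    (ha0 : ∑ k ∈ Finset.Icc l m, a k = 0)
    (ha1 : ∑ k ∈ Finset.Icc l m, (k : ℚ) * a k = 1)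
    (P Q : ℕ → Polynomial ℚ)
    (hP0 : P 0 = 1) (hQ0 : Q 0 = 1)
    (hPD : ∀ n : ℕ, 1 ≤ n → Polynomial.derivative (P n) = (n : ℚ) • P (n - 1))
    (hQD : ∀ n : ℕ, 1 ≤ n → Polynomial.derivative (Q n) = (n : ℚ) • Q (n - 1))
    (hPΔ : ∀ n : ℕ, 1 ≤ n →
      ∑ k ∈ Finset.Icc l m, a k • (P n).comp (Polynomial.X + Polynomial.C (k : ℚ)) =
        (n : ℚ) • (Polynomial.X : Polynomial ℚ) ^ (n - 1))
    (hQΔ : ∀ n : ℕ, 1 ≤ n →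
      ∑ k ∈ Finset.Icc l m, a k • (Q n).comp (Polynomial.X + Polynomial.C (k : ℚ)) =
        (n : ℚ) • (Polynomial.X : Polynomial ℚ) ^ (n - 1)) :
    ∀ n : ℕ, P n = Q n := by

  intro n
  induction n with
  | zero => rw [hP0, hQ0]
  | succ n ih =>
    -- derivative of the difference at level n+1 is zero
    have h1 : Polynomial.derivative (P (n+1) - Q (n+1)) = 0 := by
      rw [map_sub, hPD (n+1) (by omega), hQD (n+1) (by omega)]
      simp [ih]
    have hdeg1 : (P (n+1) - Q (n+1)).natDegree = 0 :=
      Polynomial.natDegree_eq_zero_of_derivative_eq_zero h1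
    obtain ⟨c, hc⟩ : ∃ c, P (n+1) - Q (n+1) = Polynomial.C c :=
      ⟨_, Polynomial.eq_C_of_natDegree_eq_zero hdeg1⟩
    -- the difference at level n+2
    set A : ℚ := ((n:ℚ)+2) * c with hA
    have h2 : Polynomial.derivative (P (n+2) - Q (n+2)) = Polynomial.C A := by
      rw [map_sub, hPD (n+2) (by omega), hQD (n+2) (by omega)]
      have : (n+2) - 1 = n+1 := by omega
      rw [this, ← smul_sub, hc]
      rw [hA]
      push_cast
      rw [Polynomial.smul_C, smul_eq_mul]
    have h3 : Polynomial.derivative (P (n+2) - Q (n+2) - Polynomial.C A * Polynomial.X) = 0 := by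
      rw [map_sub, h2]
      simp
    obtain ⟨d, hd⟩ : ∃ d, P (n+2) - Q (n+2) - Polynomial.C A * Polynomial.X = Polynomial.C d :=
      ⟨_, Polynomial.eq_C_of_natDegree_eq_zero
        (Polynomial.natDegree_eq_zero_of_derivative_eq_zero h3)⟩
    have hE : P (n+2) - Q (n+2) = Polynomial.C A * Polynomial.X + Polynomial.C d := by
      linear_combination hd
    -- Δ of the difference at level n+2 is 0
    have h4 : ∑ k ∈ Finset.Icc l m,
        a k • (P (n+2) - Q (n+2)).comp (Polynomial.X + Polynomial.C (k : ℚ)) = 0 := by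
      have := hPΔ (n+2) (by omega)
      have h' := hQΔ (n+2) (by omega)
      calc ∑ k ∈ Finset.Icc l m,
            a k • (P (n+2) - Q (n+2)).comp (Polynomial.X + Polynomial.C (k : ℚ))
          = (∑ k ∈ Finset.Icc l m, a k • (P (n+2)).comp (Polynomial.X + Polynomial.C (k : ℚ)))
            - ∑ k ∈ Finset.Icc l m, a k • (Q (n+2)).comp (Polynomial.X + Polynomial.C (k : ℚ)) := by
            rw [← Finset.sum_sub_distrib]
            refine Finset.sum_congr rfl fun k _ => ?_
            rw [Polynomial.sub_comp, smul_sub]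
        _ = 0 := by rw [this, h', sub_self]
    -- evaluate at 0
    have h5 := congrArg (Polynomial.eval 0) h4
    rw [Polynomial.eval_finset_sum] at h5
    simp only [Polynomial.eval_smul, Polynomial.eval_comp, Polynomial.eval_add,
      Polynomial.eval_X, Polynomial.eval_C, zero_add, Polynomial.eval_zero, smul_eq_mul] at h5
    have h6 : ∀ k ∈ Finset.Icc l m,
        a k * Polynomial.eval (k:ℚ) (P (n+2) - Q (n+2)) = A * ((k:ℚ) * a k) + d * a k := by
      intro k _
      rw [hE]
      simp
      ring
    rw [Finset.sum_congr rfl h6, Finset.sum_add_distrib, ← Finset.mul_sum, ← Finset.mul_sum,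
      ha0, ha1, mul_one, mul_zero, add_zero] at h5
    have hc0 : c = 0 := by
      have hn : ((n:ℚ)+2) ≠ 0 := by positivity
      have : ((n:ℚ)+2) * c = 0 := by rw [← hA]; exact h5
      exact (mul_eq_zero.mp this).resolve_left hn
    have : P (n+1) - Q (n+1) = 0 := by rw [hc, hc0, map_zero]
    exact sub_eq_zero.mp this
end

section
/- For every n ≥ 1, the Bernoulli-type polynomials of the first kind B_n^q(x) satisfy (B_n^q)'(x) = n·B_{n-1}^q(x) and Σ_{k=l}^{m} a_k B_n^q(x+k) = n·x^{n-1}, and B_0^q(x) = 1. -/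
/-!
Read coefficientwise, a `ℚ`-linear operator `L` on `ℚ[x]` commutes with multiplication by a
power series in `t` with constant coefficients, so `L` applied to the generating function
`J(t) e^{xt}` of the `B_n` is `J(t) · L(e^{xt})`. Now `d/dx e^{xt} = t e^{xt}`, and the shift
`x ↦ x + k` multiplies `e^{xt}` by `e^{kt}`, so `Δ_q e^{xt} = Δ_q(t) e^{xt}` and
`Δ_q (J e^{xt}) = t e^{xt}`. Comparing coefficients of `tⁿ/n!` gives both identities, and
`B_0 = J(0) = 1` because `J Δ_q = t` with `Δ_q(t) = t + O(t²)`.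
-/

open scoped Polynomial Nat
open PowerSeries

local notation "expXt" R:max => mk fun n => (n ! : ℚ)⁻¹ • (Polynomial.X : R[X]) ^ n

namespace PowerSeries

variable {R A : Type*} [CommRing R] [CommRing A] [Algebra R A]

theorem linearMap_coeff_map_algebraMap_mul (L : A →ₗ[R] A) (f : R⟦X⟧) (g : A⟦X⟧)
    (n : ℕ) :
    L (coeff n (map (algebraMap R A) f * g)) =
      coeff n (map (algebraMap R A) f * mk fun k => L (coeff k g)) := by
  simp only [coeff_mul, map_sum, coeff_map, coeff_mk, ← Algebra.smul_def, map_smul]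

theorem constantCoeff_eq_one_of_mul_eq_X {f g : R⟦X⟧} (h : f * g = X)
    (hg₀ : constantCoeff g = 0) (hg₁ : coeff 1 g = 1) : constantCoeff f = 1 := by
  have h₁ := congrArg (coeff 1) h
  rw [coeff_mul, Finset.Nat.sum_antidiagonal_succ, Finset.Nat.antidiagonal_zero,
    Finset.sum_singleton] at h₁
  simpa [hg₀, hg₁] using h₁

theorem mk_inv_factorial_smul_pow [Algebra ℚ A] (a : A) :
    (mk fun n => (n.factorial : ℚ)⁻¹ • a ^ n) = rescale a (exp A) := by
  ext n
  simp [coeff_exp, Algebra.smul_def, mul_comm]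

theorem map_rescale_exp {B : Type*} [CommRing B] [Algebra ℚ A] [Algebra ℚ B] (f : A →+* B)
    (a : A) : map f (rescale a (exp A)) = rescale (f a) (exp B) := by
  rw [← rescale_map, map_exp]

theorem mk_derivative_coeff_expXt [Algebra ℚ R] :
    (mk fun n => Polynomial.derivative (coeff n (expXt R))) = X * expXt R := by
  refine PowerSeries.ext fun n => ?_
  cases n with
  | zero => simp
  | succ n =>
    rw [coeff_succ_X_mul, coeff_mk, coeff_mk, coeff_mk, Polynomial.derivative_smul,
      Polynomial.derivative_X_pow_succ, Polynomial.C_mul', ← Nat.cast_succ,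
      Nat.cast_smul_eq_nsmul, ← Nat.cast_smul_eq_nsmul ℚ, smul_smul, Nat.factorial_succ,
      Nat.cast_mul, mul_inv, mul_comm, ← mul_assoc,
      mul_inv_cancel₀ (Nat.cast_ne_zero.2 n.succ_ne_zero), one_mul]

theorem mk_comp_X_add_C_coeff_expXt [Algebra ℚ R] (c : R) :
    (mk fun n => (coeff n (expXt R)).comp (Polynomial.X + Polynomial.C c)) =
      expXt R * map Polynomial.C (mk fun n => (n.factorial : ℚ)⁻¹ • c ^ n) := by
  simp only [coeff_mk, Polynomial.smul_comp, Polynomial.pow_comp, Polynomial.X_comp]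
  rw [mk_inv_factorial_smul_pow, mk_inv_factorial_smul_pow, mk_inv_factorial_smul_pow,
    map_rescale_exp, exp_mul_exp_eq_exp_add]

end PowerSeries

theorem factorial_succ_smul_inv_factorial_smul {M : Type*} [AddCommGroup M] [Module ℚ M]
    (n : ℕ) (x : M) :
    ((n + 1).factorial : ℚ) • (n.factorial : ℚ)⁻¹ • x = ((n + 1 : ℕ) : ℚ) • x := by
  rw [smul_smul, Nat.factorial_succ, Nat.cast_mul, mul_assoc,
    mul_inv_cancel₀ (Nat.cast_ne_zero.2 n.factorial_ne_zero), mul_one]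

theorem linearMap_eq_factorial_smul_coeff {J : ℚ⟦X⟧} {B : ℕ → ℚ[X]}
    (hB : map Polynomial.C J * expXt ℚ = mk fun n => (n.factorial : ℚ)⁻¹ • B n)
    (L : ℚ[X] →ₗ[ℚ] ℚ[X]) (n : ℕ) :
    L (B n) = (n.factorial : ℚ) •
      coeff n (map Polynomial.C J * mk fun k => L (coeff k (expXt ℚ))) := by
  have hBn : B n = (n.factorial : ℚ) • coeff n (map Polynomial.C J * expXt ℚ) := by
    rw [hB, coeff_mk, smul_smul, mul_inv_cancel₀ (Nat.cast_ne_zero.2 n.factorial_ne_zero),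
      one_smul]
  rw [hBn, map_smul, ← Polynomial.algebraMap_eq, linearMap_coeff_map_algebraMap_mul]

theorem mk_sum_smul_comp_X_add_C_coeff_expXt {ι : Type*} (s : Finset ι) (a c : ι → ℚ) :
    (mk fun n => ∑ k ∈ s, a k •
        (coeff n (expXt ℚ)).comp (Polynomial.X + Polynomial.C (c k))) =
      expXt ℚ * map Polynomial.C (mk fun n => (∑ k ∈ s, a k * c k ^ n) / n.factorial) := by
  have hshift : (mk fun n => ∑ k ∈ s, a k •
        (coeff n (expXt ℚ)).comp (Polynomial.X + Polynomial.C (c k))) =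
      ∑ k ∈ s, a k • mk fun n =>
        (coeff n (expXt ℚ)).comp (Polynomial.X + Polynomial.C (c k)) := by
    ext1 n
    simp only [coeff_mk, map_sum, coeff_smul]
  have hsum : (mk fun n => (∑ k ∈ s, a k * c k ^ n) / n.factorial) =
      ∑ k ∈ s, a k • mk fun n => (n.factorial : ℚ)⁻¹ • c k ^ n := by
    ext n
    simp only [coeff_mk, map_sum, coeff_smul, smul_eq_mul, Finset.sum_div]
    exact Finset.sum_congr rfl fun _ _ => by ring
  rw [hshift, hsum, map_sum, Finset.mul_sum]
  refine Finset.sum_congr rfl fun k _ => ?_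
  rw [mk_comp_X_add_C_coeff_expXt, ← mul_smul_comm]
  congr 1
  ext1 n
  rw [coeff_smul, coeff_map, coeff_map, coeff_smul, Polynomial.smul_C]

theorem bernoulli_type_first_kind_characterization_general
    (l m : ℤ) (a : ℤ → ℚ)
    (ha0 : ∑ k ∈ Finset.Icc l m, a k = 0)
    (ha1 : ∑ k ∈ Finset.Icc l m, (k : ℚ) * a k = 1)
    -- `J = t/Δ_q(t)`, where the indicator `Δ_q(t)` has coefficients
    -- `(∑_k a_k kⁿ)/n!`:
    (J : PowerSeries ℚ)
    (hJ : J * (PowerSeries.mk fun n =>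
        (∑ k ∈ Finset.Icc l m, a k * (k : ℚ) ^ n) / (n.factorial : ℚ)) = PowerSeries.X)
    -- the Bernoulli-type polynomials of the first kind:
    (B : ℕ → Polynomial ℚ)
    (hB : (PowerSeries.map (Polynomial.C : ℚ →+* Polynomial ℚ) J) *
        (PowerSeries.mk fun n => ((n.factorial : ℚ)⁻¹) • (Polynomial.X : Polynomial ℚ) ^ n) =
      PowerSeries.mk fun n => ((n.factorial : ℚ)⁻¹) • B n) :
    B 0 = 1 ∧
    ∀ n : ℕ, 1 ≤ n →
      Polynomial.derivative (B n) = (n : ℚ) • B (n - 1) ∧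
      ∑ k ∈ Finset.Icc l m, a k • (B n).comp (Polynomial.X + Polynomial.C (k : ℚ)) =
        (n : ℚ) • (Polynomial.X : Polynomial ℚ) ^ (n - 1) := by
  have hJ₀ : constantCoeff J = 1 :=
    constantCoeff_eq_one_of_mul_eq_X hJ (by simpa using ha0) (by simpa [mul_comm] using ha1)
  have hBn (n : ℕ) :
      coeff n (map Polynomial.C J * expXt ℚ) = (n.factorial : ℚ)⁻¹ • B n := by
    rw [hB, coeff_mk]
  have hB₀ : B 0 = 1 := by
    have h := hBn 0
    rw [coeff_mul, Finset.Nat.antidiagonal_zero, Finset.sum_singleton, coeff_map,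
      coeff_zero_eq_constantCoeff_apply, hJ₀] at h
    simpa using h.symm
  refine ⟨hB₀, fun n hn => ?_⟩
  obtain ⟨n, rfl⟩ := Nat.exists_eq_add_of_le' hn
  let Δ : ℚ[X] →ₗ[ℚ] ℚ[X] := ∑ k ∈ Finset.Icc l m,
    a k • (Polynomial.aeval (Polynomial.X + Polynomial.C (k : ℚ))).toLinearMap
  have hΔ (p : ℚ[X]) :
      Δ p = ∑ k ∈ Finset.Icc l m, a k • p.comp (Polynomial.X + Polynomial.C (k : ℚ)) := by
    simp [Δ, Polynomial.comp_eq_aeval]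
  constructor
  · rw [linearMap_eq_factorial_smul_coeff hB Polynomial.derivative,
      mk_derivative_coeff_expXt, mul_left_comm, coeff_succ_X_mul, hBn,
      factorial_succ_smul_inv_factorial_smul, Nat.add_sub_cancel]
  · rw [← hΔ, linearMap_eq_factorial_smul_coeff hB Δ]
    simp only [hΔ]
    rw [mk_sum_smul_comp_X_add_C_coeff_expXt, mul_left_comm, ← map_mul, hJ, map_X,
      coeff_succ_mul_X, coeff_mk, factorial_succ_smul_inv_factorial_smul, Nat.add_sub_cancel]

/-- Let `Δ_q(t) = ∑_{k=l}^{m} a_k e^{kt}` with `∑ a_k = 0`,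
`∑ k·a_k = 1`, and let the Bernoulli-type polynomials of the first kind be
defined by `(t/Δ_q(t))·e^{xt} = ∑_{n≥0} B_n^q(x) tⁿ/n!`.  Then `B_0^q = 1` and,
for every `n ≥ 1`, `(B_n^q)' = n·B_{n-1}^q` and `Δ_q B_n^q(x) = n·x^{n-1}`. -/
theorem bernoulli_type_first_kind_characterization
    (l m : ℤ) (hlm : l < m) (a : ℤ → ℚ)
    (ha0 : ∑ k ∈ Finset.Icc l m, a k = 0)
    (ha1 : ∑ k ∈ Finset.Icc l m, (k : ℚ) * a k = 1)
    -- `J = t/Δ_q(t)`, where the indicator `Δ_q(t)` has coefficients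
    -- `(∑_k a_k kⁿ)/n!`:
    (J : PowerSeries ℚ)
    (hJ : J * (PowerSeries.mk fun n =>
        (∑ k ∈ Finset.Icc l m, a k * (k : ℚ) ^ n) / (n.factorial : ℚ)) = PowerSeries.X)
    -- the Bernoulli-type polynomials of the first kind:
    (B : ℕ → Polynomial ℚ)
    (hB : (PowerSeries.map (Polynomial.C : ℚ →+* Polynomial ℚ) J) *
        (PowerSeries.mk fun n => ((n.factorial : ℚ)⁻¹) • (Polynomial.X : Polynomial ℚ) ^ n) =
      PowerSeries.mk fun n => ((n.factorial : ℚ)⁻¹) • B n) :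
    B 0 = 1 ∧
    ∀ n : ℕ, 1 ≤ n →
      Polynomial.derivative (B n) = (n : ℚ) • B (n - 1) ∧
      ∑ k ∈ Finset.Icc l m, a k • (B n).comp (Polynomial.X + Polynomial.C (k : ℚ)) =
        (n : ℚ) • (Polynomial.X : Polynomial ℚ) ^ (n - 1) :=
  bernoulli_type_first_kind_characterization_general l m a ha0 ha1 J hJ B hB
end

section
/- For every integer a and every n ≥ 1, the higher-order Bernoulli-type polynomials satisfy the difference equation Σ_{j=l}^{m} a_j · B_{n,a}^q(x+j) = n · B_{n-1,a-1}^q(x). -/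
/-!
Writing `egf p = ∑ pₙ tⁿ/n!`, the hypothesis says `egf (B a) = (t/Δ)^a e^{xt}`. Substituting
`x + j` for `x` is a ring map on `ℚ[x]` sending `e^{xt}` to `e^{xt} e^{jt}`, so
`egf (B a ∘ (x + j)) = egf (B a) · e^{jt}`. Summing against the `c j` gives
`egf (B a) · Δ(t) = (t/Δ)^(a-1) · t · e^{xt} = t · egf (B (a - 1))`, and comparing the
coefficients of `tⁿ` yields the difference equation.
-/

open PowerSeries
open scoped Nat Polynomial

namespace PowerSeries

variable {A : Type*} [CommRing A] [Algebra ℚ A]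

def egf (p : ℕ → A) : A⟦X⟧ := mk fun n => (n ! : ℚ)⁻¹ • p n

@[simp]
theorem coeff_egf (p : ℕ → A) (n : ℕ) : coeff n (egf p) = (n ! : ℚ)⁻¹ • p n :=
  coeff_mk _ _

theorem egf_pow (a : A) : egf (a ^ ·) = rescale a (exp A) := by
  ext n
  simp [coeff_rescale, Algebra.smul_def, mul_comm]

theorem egf_sum_smul {ι : Type*} (s : Finset ι) (c : ι → ℚ) (p : ι → ℕ → A) :
    egf (fun n => ∑ i ∈ s, c i • p i n) = ∑ i ∈ s, c i • egf (p i) := by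
  ext n
  simp [map_sum, Finset.smul_sum, smul_comm (n ! : ℚ)⁻¹]

theorem map_egf {B : Type*} [CommRing B] [Algebra ℚ B] (f : A →ₐ[ℚ] B) (p : ℕ → A) :
    map (f : A →+* B) (egf p) = egf (f ∘ p) := by
  ext n
  simp

theorem egf_succ_eq_of_egf_eq_X_mul {p q : ℕ → A} (h : egf p = X * egf q) (n : ℕ) :
    p (n + 1) = ((n + 1 : ℕ) : ℚ) • q n := by
  have hn := congrArg (coeff (n + 1)) h
  rw [coeff_succ_X_mul, coeff_egf, coeff_egf, Nat.factorial_succ, Nat.cast_mul, mul_inv_rev,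
    mul_smul] at hn
  rw [smul_right_inj (by positivity), inv_smul_eq_iff₀ (by positivity)] at hn
  exact hn

theorem sum_smul_rescale_exp {ι : Type*} (s : Finset ι) (c x : ι → ℚ) :
    ∑ i ∈ s, c i • rescale (algebraMap ℚ A (x i)) (exp A) =
      map (algebraMap ℚ A) (mk fun n => (∑ i ∈ s, c i * x i ^ n) / n !) := by
  ext n
  simp only [map_sum, coeff_smul, coeff_rescale, coeff_exp, coeff_map, coeff_mk, Finset.sum_div]
  refine Finset.sum_congr rfl fun i _ => ?_
  simp only [Algebra.smul_def, ← map_pow, ← map_mul]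
  congr 1
  ring

theorem egf_comp_X_add_C {F : ℚ⟦X⟧} {p : ℕ → ℚ[X]}
    (hp : map Polynomial.C F * egf (Polynomial.X ^ ·) = egf p) (x : ℚ) :
    egf (fun n => (p n).comp (Polynomial.X + Polynomial.C x)) =
      egf p * rescale (Polynomial.C x) (exp ℚ[X]) := by
  let σ : ℚ[X] →ₐ[ℚ] ℚ[X] := Polynomial.aeval (Polynomial.X + Polynomial.C x)
  have hexp : map (σ : ℚ[X] →+* ℚ[X]) (rescale Polynomial.X (exp ℚ[X])) =
      rescale (Polynomial.X + Polynomial.C x) (exp ℚ[X]) := by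
    rw [← rescale_map, map_exp]
    simp [σ]
  have hC : map (σ : ℚ[X] →+* ℚ[X]) (map Polynomial.C F) = map Polynomial.C F := by
    ext n
    simp [σ]
  calc egf (fun n => (p n).comp (Polynomial.X + Polynomial.C x))
      _ = map (σ : ℚ[X] →+* ℚ[X]) (egf p) := (map_egf σ p).symm
      _ = map Polynomial.C F * rescale (Polynomial.X + Polynomial.C x) (exp ℚ[X]) := by
        rw [← hp, egf_pow, map_mul, hC, hexp]
      _ = egf p * rescale (Polynomial.C x) (exp ℚ[X]) := by
        rw [← exp_mul_exp_eq_exp_add, ← mul_assoc, ← egf_pow, hp]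

end PowerSeries

theorem bernoulli_type_difference_equation_general
    (l m : ℤ) (c : ℤ → ℚ)
    -- `J a = (t/Δ_q(t))^a`, where the indicator `Δ_q(t)` has coefficients
    -- `(∑_k c_k kⁿ)/n!`:
    (J : ℤ → PowerSeries ℚ)
    (hJadd : ∀ a b : ℤ, J (a + b) = J a * J b)
    (hJ1 : J 1 * (PowerSeries.mk fun n =>
        (∑ k ∈ Finset.Icc l m, c k * (k : ℚ) ^ n) / (n.factorial : ℚ)) = PowerSeries.X)
    -- the higher-order Bernoulli-type polynomials `B a n = B_{n,a}^q`:
    (B : ℤ → ℕ → Polynomial ℚ)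
    (hB : ∀ a : ℤ,
      (PowerSeries.map (Polynomial.C : ℚ →+* Polynomial ℚ) (J a)) *
        (PowerSeries.mk fun n => ((n.factorial : ℚ)⁻¹) • (Polynomial.X : Polynomial ℚ) ^ n) =
      PowerSeries.mk fun n => ((n.factorial : ℚ)⁻¹) • B a n)
    (a : ℤ) (n : ℕ) (hn : 1 ≤ n) :
    ∑ j ∈ Finset.Icc l m, c j • (B a n).comp (Polynomial.X + Polynomial.C (j : ℚ)) =
      (n : ℚ) • B (a - 1) (n - 1) := by
  set Δ : ℚ⟦X⟧ := mk fun n => (∑ k ∈ Finset.Icc l m, c k * (k : ℚ) ^ n) / (n ! : ℚ)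
  have hJB : ∀ a, map Polynomial.C (J a) * egf (Polynomial.X ^ ·) = egf (B a) := hB
  have hJΔ : J a * Δ = X * J (a - 1) := by
    rw [← sub_add_cancel a 1, hJadd, mul_assoc, hJ1, add_sub_cancel_right, mul_comm]
  have hgen : egf (fun n => ∑ j ∈ Finset.Icc l m,
      c j • (B a n).comp (Polynomial.X + Polynomial.C (j : ℚ))) = X * egf (B (a - 1)) := by
    calc egf (fun n => ∑ j ∈ Finset.Icc l m,
          c j • (B a n).comp (Polynomial.X + Polynomial.C (j : ℚ)))
        _ = egf (B a) * ∑ j ∈ Finset.Icc l m,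
              c j • rescale (algebraMap ℚ ℚ[X] j) (exp ℚ[X]) := by
          simp only [egf_sum_smul, egf_comp_X_add_C (hJB a), Finset.mul_sum, mul_smul_comm,
            Polynomial.algebraMap_eq]
        _ = map Polynomial.C (J a * Δ) * egf (Polynomial.X ^ ·) := by
          rw [sum_smul_rescale_exp, ← hJB a, Polynomial.algebraMap_eq, map_mul]
          ring
        _ = X * egf (B (a - 1)) := by
          rw [hJΔ, map_mul, map_X, mul_assoc, hJB]
  obtain ⟨n, rfl⟩ : ∃ k, n = k + 1 := ⟨n - 1, by omega⟩
  rw [Nat.add_sub_cancel]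
  exact egf_succ_eq_of_egf_eq_X_mul hgen n

/-- ∑_{j=l}^{m} a_j · B_{n,a}^q(x+j) = n · B_{n-1,a-1}^q(x) for every integer a and n ≥ 1. -/
theorem bernoulli_type_difference_equation
    (l m : ℤ) (hlm : l < m) (c : ℤ → ℚ)
    (hc0 : ∑ k ∈ Finset.Icc l m, c k = 0)
    (hc1 : ∑ k ∈ Finset.Icc l m, (k : ℚ) * c k = 1)
    -- `J a = (t/Δ_q(t))^a`, where the indicator `Δ_q(t)` has coefficients
    -- `(∑_k c_k kⁿ)/n!`:
    (J : ℤ → PowerSeries ℚ)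
    (hJ0 : J 0 = 1)
    (hJadd : ∀ a b : ℤ, J (a + b) = J a * J b)
    (hJ1 : J 1 * (PowerSeries.mk fun n =>
        (∑ k ∈ Finset.Icc l m, c k * (k : ℚ) ^ n) / (n.factorial : ℚ)) = PowerSeries.X)
    -- the higher-order Bernoulli-type polynomials `B a n = B_{n,a}^q`:
    (B : ℤ → ℕ → Polynomial ℚ)
    (hB : ∀ a : ℤ,
      (PowerSeries.map (Polynomial.C : ℚ →+* Polynomial ℚ) (J a)) *
        (PowerSeries.mk fun n => ((n.factorial : ℚ)⁻¹) • (Polynomial.X : Polynomial ℚ) ^ n) =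
      PowerSeries.mk fun n => ((n.factorial : ℚ)⁻¹) • B a n)
    (a : ℤ) (n : ℕ) (hn : 1 ≤ n) :
    ∑ j ∈ Finset.Icc l m, c j • (B a n).comp (Polynomial.X + Polynomial.C (j : ℚ)) =
      (n : ℚ) • B (a - 1) (n - 1) :=
  bernoulli_type_difference_equation_general l m c J hJadd hJ1 B hB a n hn
end

section
/- Define p_0(x) = 1 and p_n(x) = x · B_{n-1,n}^q(x) for n ≥ 1. Then (p_n) is the basic sequence of the delta operator Δ_q: p_n(0) = 0 for every n ≥ 1, and Σ_{k=l}^{m} a_k · p_n(x+k) = n · p_{n-1}(x) for every n ≥ 1. -/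
/-!
Write `u = t/Δ(t)` and let `appell n F` be the Appell polynomials of a power series `F`,
`F(t) e^{xt} = ∑ appell n F tⁿ/n!`, so that `B_{n,a} = appell n (u^a)`. Shifting `x` by `k`
multiplies the generating function by `e^{kt}`, hence `Δ (appell n F) = appell n (F Δ)`.
Differentiating in `t` gives `x · appell n F = appell (n+1) F - appell n F'`, which writes
`p_{n+1} = x · appell n (u^{n+1})` as a difference of Appell polynomials; there `Δ` acts through
`u Δ = t` and `(u^{n+1})' Δ = (n+1) t u^{n-1} u'`, and the result is `(n+1) p_n`.
-/

open Polynomial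
open scoped Nat PowerSeries

-- Stated over a generic coefficient ring so that `Derivation.leibniz` uses the algebra structure
-- `d⁄dX` is built with; over `K[X]`, instance search finds `PowerSeries.algebraPolynomial` instead.
theorem PowerSeries.derivative_mul {A : Type*} [CommSemiring A] (f g : A⟦X⟧) :
    d⁄dX A (f * g) = f * d⁄dX A g + g * d⁄dX A f := by
  rw [Derivation.leibniz, smul_eq_mul, smul_eq_mul]

namespace Appell

variable {K : Type*} [Field K]

noncomputable def expX : K[X]⟦X⟧ := PowerSeries.mk fun n => (n ! : K)⁻¹ • (X : K[X]) ^ n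

noncomputable def appell (n : ℕ) : K⟦X⟧ →ₗ[K] K[X] where
  toFun F := (n ! : K) • PowerSeries.coeff n (PowerSeries.map C F * expX)
  map_add' F G := by simp only [map_add, add_mul, smul_add]
  map_smul' a F := by
    rw [PowerSeries.smul_eq_C_mul, map_mul (PowerSeries.map C), PowerSeries.map_C, mul_assoc,
      PowerSeries.coeff_C_mul, RingHom.id_apply]
    simp only [smul_eq_C_mul]
    ring

theorem appell_apply (n : ℕ) (F : K⟦X⟧) :
    appell n F = (n ! : K) • PowerSeries.coeff n (PowerSeries.map C F * expX) := rfl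

theorem appell_zero (F : K⟦X⟧) : appell 0 F = C (PowerSeries.constantCoeff F) := by
  rw [← PowerSeries.coeff_zero_eq_constantCoeff_apply]
  simp [appell_apply, expX, PowerSeries.coeff_mul]

theorem appell_succ_X_mul (n : ℕ) (F : K⟦X⟧) :
    appell (n + 1) (PowerSeries.X * F) = (n + 1 : K) • appell n F := by
  rw [appell_apply, appell_apply, map_mul (PowerSeries.map C), PowerSeries.map_X, mul_assoc,
    PowerSeries.coeff_succ_X_mul, smul_smul, Nat.factorial_succ]
  push_cast; ring_nf

variable [CharZero K]

theorem appell_eq_of_map_C_mul_expX_eq {F : K⟦X⟧} {A : ℕ → K[X]}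
    (h : PowerSeries.map C F * expX = PowerSeries.mk fun n => (n ! : K)⁻¹ • A n) (n : ℕ) :
    appell n F = A n := by
  rw [appell_apply, h, PowerSeries.coeff_mk, smul_smul,
    mul_inv_cancel₀ (Nat.cast_ne_zero.mpr n.factorial_ne_zero), one_smul]

theorem expX_eq_rescale : (expX : K[X]⟦X⟧) = PowerSeries.rescale X (PowerSeries.exp K[X]) := by
  ext n
  simp only [expX, PowerSeries.coeff_rescale, PowerSeries.coeff_exp, PowerSeries.coeff_mk]
  simp [Algebra.smul_def]

theorem map_compRingHom_expX (a : K) :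
    PowerSeries.map (compRingHom (X + C a)) expX =
      expX * PowerSeries.map C (PowerSeries.rescale a (PowerSeries.exp K)) := by
  have hC : PowerSeries.map C (PowerSeries.rescale a (PowerSeries.exp K)) =
      PowerSeries.rescale (C a) (PowerSeries.exp K[X]) := by
    ext n; simp [PowerSeries.coeff_rescale, PowerSeries.coeff_exp]
  have hcomp : PowerSeries.map (compRingHom (X + C a)) expX =
      PowerSeries.rescale (X + C a) (PowerSeries.exp K[X]) := by
    ext n; simp [PowerSeries.coeff_rescale, PowerSeries.coeff_exp, expX, Algebra.smul_def]
    exact mul_comm _ _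
  rw [hC, hcomp, expX_eq_rescale, PowerSeries.exp_mul_exp_eq_exp_add]

theorem appell_comp_X_add_C (n : ℕ) (F : K⟦X⟧) (a : K) :
    (appell n F).comp (X + C a) = appell n (F * PowerSeries.rescale a (PowerSeries.exp K)) := by
  have hF :
      PowerSeries.map (compRingHom (X + C a)) (PowerSeries.map C F) = PowerSeries.map C F := by
    ext n : 1; simp [PowerSeries.coeff_map]
  rw [appell_apply, appell_apply, smul_comp, ← coe_compRingHom_apply, ← PowerSeries.coeff_map,
    map_mul, hF, map_compRingHom_expX, map_mul (PowerSeries.map C), mul_comm expX, mul_assoc]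

theorem derivative_expX : d⁄dX K[X] expX = PowerSeries.C (X : K[X]) * expX := by
  ext n : 1
  have hn : ((n + 1)! : K)⁻¹ * (n + 1) = (n ! : K)⁻¹ := by
    rw [Nat.factorial_succ, Nat.cast_mul, Nat.cast_succ, mul_inv, mul_right_comm,
      inv_mul_cancel₀ (Nat.cast_add_one_ne_zero n), one_mul]
  simp only [PowerSeries.coeff_derivative, PowerSeries.coeff_C_mul, expX, PowerSeries.coeff_mk,
    smul_eq_C_mul]
  rw [show (n + 1 : K[X]) = C ((n : K) + 1) by simp, ← hn, map_mul]
  ring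

omit [CharZero K] in
theorem map_C_derivative (F : K⟦X⟧) :
    PowerSeries.map C (d⁄dX K F) = d⁄dX K[X] (PowerSeries.map C F) := by
  ext n : 1
  simp [PowerSeries.coeff_derivative]

theorem X_mul_appell (n : ℕ) (F : K⟦X⟧) :
    X * appell n F = appell (n + 1) F - appell n (d⁄dX K F) := by
  rw [eq_sub_iff_add_eq]
  have hG : d⁄dX K[X] (PowerSeries.map C F * expX) =
      PowerSeries.C X * (PowerSeries.map C F * expX) + PowerSeries.map C (d⁄dX K F) * expX := by
    rw [PowerSeries.derivative_mul, derivative_expX, map_C_derivative]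
    ring
  have hcoeff := congrArg (PowerSeries.coeff n) hG
  rw [PowerSeries.coeff_derivative, map_add, PowerSeries.coeff_C_mul] at hcoeff
  rw [appell_apply, appell_apply, appell_apply, Nat.factorial_succ, Nat.cast_mul, mul_comm,
    mul_smul]
  simp only [smul_eq_C_mul, map_natCast]
  push_cast
  linear_combination -(n ! : K[X]) * hcoeff

section WeightedShift

variable {ι : Type*} (s : Finset ι) (w x : ι → K)

noncomputable def weightedShift : K[X] →ₗ[K] K[X] :=
  ∑ i ∈ s, w i • (aeval (X + C (x i))).toLinearMap

noncomputable def weightedShiftSeries : K⟦X⟧ :=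
  ∑ i ∈ s, w i • PowerSeries.rescale (x i) (PowerSeries.exp K)

omit [CharZero K] in
theorem weightedShift_apply (P : K[X]) :
    weightedShift s w x P = ∑ i ∈ s, w i • P.comp (X + C (x i)) := by
  simp [weightedShift, comp_eq_aeval]

theorem weightedShift_appell (n : ℕ) (F : K⟦X⟧) :
    weightedShift s w x (appell n F) = appell n (F * weightedShiftSeries s w x) := by
  simp only [weightedShift_apply, appell_comp_X_add_C, weightedShiftSeries, Finset.mul_sum,
    mul_smul_comm, map_sum, map_smul]

theorem mk_sum_mul_pow_div_factorial :
    (PowerSeries.mk fun n => (∑ i ∈ s, w i * x i ^ n) / (n ! : K)) = weightedShiftSeries s w x := by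
  ext n
  simp only [PowerSeries.coeff_mk, weightedShiftSeries, map_sum, PowerSeries.coeff_smul,
    PowerSeries.coeff_rescale, PowerSeries.coeff_exp, Finset.sum_div]
  refine Finset.sum_congr rfl fun i _ => ?_
  simp [div_eq_mul_inv, mul_assoc]

theorem constantCoeff_weightedShiftSeries :
    PowerSeries.constantCoeff (weightedShiftSeries s w x) = ∑ i ∈ s, w i := by
  simp [weightedShiftSeries, ← PowerSeries.coeff_zero_eq_constantCoeff_apply,
    PowerSeries.coeff_rescale]

end WeightedShift

section BasicSequence

variable {T : K[X] →ₗ[K] K[X]} {D u : K⟦X⟧}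

theorem map_X_mul_appell_zero (hT : ∀ n F, T (appell n F) = appell n (F * D))
    (hu : u * D = PowerSeries.X) (hD : PowerSeries.constantCoeff D = 0) :
    T (X * appell 0 u) = 1 := by
  rw [X_mul_appell, map_sub, hT, hT, hu, ← mul_one PowerSeries.X, appell_succ_X_mul, appell_zero,
    appell_zero]
  simp [hD]

theorem map_X_mul_appell_pow_succ (hT : ∀ n F, T (appell n F) = appell n (F * D))
    (hu : u * D = PowerSeries.X) (e : ℕ) :
    T (X * appell (e + 1) (u ^ (e + 2))) = (e + 2 : K) • (X * appell e (u ^ (e + 1))) := by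
  have hpow : u ^ (e + 2) * D = PowerSeries.X * u ^ (e + 1) := by
    rw [pow_succ, mul_assoc, hu, mul_comm]
  have hderiv_pow : d⁄dX K (u ^ (e + 1)) = (e + 1 : K) • (u ^ e * d⁄dX K u) := by
    rw [PowerSeries.derivative_pow, PowerSeries.smul_eq_C_mul]
    simp only [map_add, map_natCast, map_one, Nat.add_sub_cancel]
    push_cast
    ring
  have hderiv_mul :
      d⁄dX K (u ^ (e + 2)) * D = PowerSeries.X * ((e + 2 : K) • (u ^ e * d⁄dX K u)) := by
    rw [PowerSeries.derivative_pow, PowerSeries.smul_eq_C_mul, ← hu]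
    simp only [map_add, map_natCast, map_ofNat]
    push_cast
    ring
  have h1 : appell (e + 2) (PowerSeries.X * u ^ (e + 1)) =
      (e + 2 : K) • appell (e + 1) (u ^ (e + 1)) := by
    rw [appell_succ_X_mul]
    push_cast
    ring_nf
  have h2 : appell (e + 1) (PowerSeries.X * ((e + 2 : K) • (u ^ e * d⁄dX K u))) =
      (e + 2 : K) • appell e (d⁄dX K (u ^ (e + 1))) := by
    rw [appell_succ_X_mul, map_smul, smul_comm, hderiv_pow, map_smul]
  calc T (X * appell (e + 1) (u ^ (e + 2)))
      = appell (e + 2) (u ^ (e + 2) * D) - appell (e + 1) (d⁄dX K (u ^ (e + 2)) * D) := by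
        rw [X_mul_appell, map_sub, hT, hT]
    _ = (e + 2 : K) • (appell (e + 1) (u ^ (e + 1)) - appell e (d⁄dX K (u ^ (e + 1)))) := by
        rw [hpow, hderiv_mul, h1, h2, smul_sub]
    _ = (e + 2 : K) • (X * appell e (u ^ (e + 1))) := by
        rw [X_mul_appell]

end BasicSequence

end Appell

open Appell

theorem basic_sequence_from_bernoulli_type_general
    (l m : ℤ) (c : ℤ → ℚ)
    (hc0 : ∑ k ∈ Finset.Icc l m, c k = 0)
    -- `J a = (t/Δ_q(t))^a`, where the indicator `Δ_q(t)` has coefficients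
    -- `(∑_k c_k kⁿ)/n!`:
    (J : ℤ → PowerSeries ℚ)
    (hJadd : ∀ a b : ℤ, J (a + b) = J a * J b)
    (hJ1 : J 1 * (PowerSeries.mk fun n =>
        (∑ k ∈ Finset.Icc l m, c k * (k : ℚ) ^ n) / (n.factorial : ℚ)) = PowerSeries.X)
    -- the higher-order Bernoulli-type polynomials `B a n = B_{n,a}^q`:
    (B : ℤ → ℕ → Polynomial ℚ)
    (hB : ∀ a : ℤ,
      (PowerSeries.map (Polynomial.C : ℚ →+* Polynomial ℚ) (J a)) *
        (PowerSeries.mk fun n => ((n.factorial : ℚ)⁻¹) • (Polynomial.X : Polynomial ℚ) ^ n) =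
      PowerSeries.mk fun n => ((n.factorial : ℚ)⁻¹) • B a n)
    (p : ℕ → Polynomial ℚ)
    (hp0 : p 0 = 1)
    (hpn : ∀ n : ℕ, 1 ≤ n → p n = Polynomial.X * B (n : ℤ) (n - 1)) :
    ∀ n : ℕ, 1 ≤ n →
      (p n).eval 0 = 0 ∧
      ∑ k ∈ Finset.Icc l m, c k • (p n).comp (Polynomial.X + Polynomial.C (k : ℚ)) =
        (n : ℚ) • p (n - 1) := by
  set D := weightedShiftSeries (Finset.Icc l m) c (fun k => (k : ℚ))
  have hu : J 1 * D = PowerSeries.X := by rw [← hJ1, mk_sum_mul_pow_div_factorial]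
  have hD : PowerSeries.constantCoeff D = 0 := by rwa [constantCoeff_weightedShiftSeries]
  have hT := weightedShift_appell (Finset.Icc l m) c (fun k => (k : ℚ))
  have hJpow : ∀ d : ℕ, J (d + 1) = J 1 ^ (d + 1) := by
    intro d
    induction d with
    | zero => simp
    | succ d ih => rw [Nat.cast_succ, hJadd _ 1, ih, pow_succ _ (d + 1)]
  have hp : ∀ d : ℕ, p (d + 1) = X * appell d (J 1 ^ (d + 1)) := by
    intro d
    rw [hpn (d + 1) (Nat.le_add_left 1 d), ← hJpow, appell_eq_of_map_C_mul_expX_eq (hB _)]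
    simp
  intro n hn
  obtain ⟨d, rfl⟩ := Nat.exists_eq_add_of_le' hn
  refine ⟨by simp [hp], ?_⟩
  rw [← weightedShift_apply]
  rcases d with _ | e
  · simp [hp, hp0, map_X_mul_appell_zero hT hu hD]
  · rw [Nat.add_sub_cancel, hp, hp, map_X_mul_appell_pow_succ hT hu]
    push_cast
    ring_nf

/-- with p_0(x) = 1 and p_n(x) = x·B_{n-1,n}^q(x), the sequence (p_n) is the basic sequence of Δ_q: p_n(0) = 0 and Δ_q p_n = n·p_{n-1} for n ≥ 1. -/
theorem basic_sequence_from_bernoulli_type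
    (l m : ℤ) (hlm : l < m) (c : ℤ → ℚ)
    (hc0 : ∑ k ∈ Finset.Icc l m, c k = 0)
    (hc1 : ∑ k ∈ Finset.Icc l m, (k : ℚ) * c k = 1)
    -- `J a = (t/Δ_q(t))^a`, where the indicator `Δ_q(t)` has coefficients
    -- `(∑_k c_k kⁿ)/n!`:
    (J : ℤ → PowerSeries ℚ)
    (hJ0 : J 0 = 1)
    (hJadd : ∀ a b : ℤ, J (a + b) = J a * J b)
    (hJ1 : J 1 * (PowerSeries.mk fun n =>
        (∑ k ∈ Finset.Icc l m, c k * (k : ℚ) ^ n) / (n.factorial : ℚ)) = PowerSeries.X)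
    -- the higher-order Bernoulli-type polynomials `B a n = B_{n,a}^q`:
    (B : ℤ → ℕ → Polynomial ℚ)
    (hB : ∀ a : ℤ,
      (PowerSeries.map (Polynomial.C : ℚ →+* Polynomial ℚ) (J a)) *
        (PowerSeries.mk fun n => ((n.factorial : ℚ)⁻¹) • (Polynomial.X : Polynomial ℚ) ^ n) =
      PowerSeries.mk fun n => ((n.factorial : ℚ)⁻¹) • B a n)
    (p : ℕ → Polynomial ℚ)
    (hp0 : p 0 = 1)
    (hpn : ∀ n : ℕ, 1 ≤ n → p n = Polynomial.X * B (n : ℤ) (n - 1)) :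
    ∀ n : ℕ, 1 ≤ n →
      (p n).eval 0 = 0 ∧
      ∑ k ∈ Finset.Icc l m, c k • (p n).comp (Polynomial.X + Polynomial.C (k : ℚ)) =
        (n : ℚ) • p (n - 1) :=
  basic_sequence_from_bernoulli_type_general l m c hc0 J hJadd hJ1 B hB p hp0 hpn
end
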